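/- arXiv:2104.14832 — 2 statements merged into one kernel-verified Lean document; each statement's English description precedes it below -/
import Mathlib

section
/- Under the assumptions of the string-averaging algorithm (T = Σ_t ω_t U_t with U_t sQNE, common fixed point z, σ = σ_max, λ_k ∈ [ε, 1−ε]), the iterates satisfy ‖x^{k+1} − z‖² ≤ ‖x^k − z‖² − λ_k(1−λ_k)‖T x^k − x^k‖² for every z ∈ Fix T and every k with x^k ∉ Fix T. -/
/-!
If `‖p - z‖ ≤ ‖x - z‖` then `2⟪p - x, x - z⟫ + ‖p - x‖² = ‖p - z‖² - ‖x - z‖² ≤ 0`.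
Averaging this over the points `U_t x` with the weights `ω_t` gives
`2⟪T x - x, x - z⟫ + ∑ ω_t ‖U_t x - x‖² ≤ 0` for every common fixed point `z`.
At a fixed point of `T`, anchored at a common fixed point of the `U_t`, it forces
`U_t x = x` for all `t`, so `Fix T = ⋂ Fix U_t`. Along the iteration, with
`d = T x - x` and `σ ‖d‖² = ∑ ω_t ‖U_t x - x‖²`, it reads `2⟪d, x - z⟫ ≤ -σ ‖d‖²`,
and Jensen's inequality `‖d‖² ≤ ∑ ω_t ‖U_t x - x‖²` gives `σ ≥ 1`; expanding
`‖x + λσ d - z‖²` then yields a decrease of `λ(1 - λ)σ²‖d‖² ≥ λ(1 - λ)‖d‖²`.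
-/

open RealInnerProductSpace

section

variable {H : Type*} [NormedAddCommGroup H] [InnerProductSpace ℝ H]

theorem two_mul_inner_sub_add_norm_sub_sq_le {p x z : H} (h : ‖p - z‖ ≤ ‖x - z‖) :
    2 * ⟪p - x, x - z⟫ + ‖p - x‖ ^ 2 ≤ 0 := by
  have hsq : ‖p - z‖ ^ 2 ≤ ‖x - z‖ ^ 2 := pow_le_pow_left₀ (norm_nonneg _) h 2
  have hexpand : ‖p - z‖ ^ 2 = ‖x - z‖ ^ 2 + 2 * ⟪x - z, p - x⟫ + ‖p - x‖ ^ 2 := by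
    rw [← norm_add_sq_real, sub_add_sub_cancel']
  rw [real_inner_comm]
  linarith

variable {ι : Type*} [Fintype ι] {ω : ι → ℝ}

theorem sum_smul_sub_of_sum_eq_one (hωsum : ∑ t, ω t = 1) (v : ι → H) (x : H) :
    ∑ t, ω t • v t - x = ∑ t, ω t • (v t - x) := by
  simp only [smul_sub, Finset.sum_sub_distrib, ← Finset.sum_smul, hωsum, one_smul]

theorem norm_sum_smul_sub_sq_le (hω : ∀ t, 0 ≤ ω t) (hωsum : ∑ t, ω t = 1)
    (v : ι → H) (x : H) :
    ‖∑ t, ω t • v t - x‖ ^ 2 ≤ ∑ t, ω t * ‖v t - x‖ ^ 2 := by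
  rw [sum_smul_sub_of_sum_eq_one hωsum]
  exact (convexOn_univ_norm.pow (fun _ _ ↦ norm_nonneg _) 2).map_sum_le
    (fun t _ ↦ hω t) hωsum (fun _ _ ↦ Set.mem_univ _)

theorem two_mul_inner_sum_smul_sub_add_le (hω : ∀ t, 0 ≤ ω t) (hωsum : ∑ t, ω t = 1)
    {v : ι → H} {x z : H} (hv : ∀ t, ‖v t - z‖ ≤ ‖x - z‖) :
    2 * ⟪∑ t, ω t • v t - x, x - z⟫ + ∑ t, ω t * ‖v t - x‖ ^ 2 ≤ 0 := by
  have hinner :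
      2 * ⟪∑ t, ω t • v t - x, x - z⟫ = ∑ t, ω t * (2 * ⟪v t - x, x - z⟫) := by
    rw [sum_smul_sub_of_sum_eq_one hωsum, sum_inner, Finset.mul_sum]
    simp only [real_inner_smul_left]
    ring_nf
  rw [hinner, ← Finset.sum_add_distrib]
  refine Finset.sum_nonpos fun t _ ↦ ?_
  rw [← mul_add]
  exact mul_nonpos_of_nonneg_of_nonpos (hω t) (two_mul_inner_sub_add_norm_sub_sq_le (hv t))

theorem eq_of_sum_smul_eq (hω : ∀ t, 0 < ω t) (hωsum : ∑ t, ω t = 1)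
    {v : ι → H} {x w : H} (hv : ∀ t, ‖v t - w‖ ≤ ‖x - w‖) (hfix : ∑ t, ω t • v t = x)
    (t : ι) : v t = x := by
  have hle := two_mul_inner_sum_smul_sub_add_le (fun t ↦ (hω t).le) hωsum hv
  rw [hfix, sub_self, inner_zero_left, mul_zero, zero_add] at hle
  have hterm : ∀ t ∈ Finset.univ, 0 ≤ ω t * ‖v t - x‖ ^ 2 :=
    fun t _ ↦ mul_nonneg (hω t).le (sq_nonneg _)
  have hsum : ∑ t, ω t * ‖v t - x‖ ^ 2 = 0 := le_antisymm hle (Finset.sum_nonneg hterm)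
  have hzero := (Finset.sum_eq_zero_iff_of_nonneg hterm).1 hsum t (Finset.mem_univ t)
  simpa [(hω t).ne', sub_eq_zero] using hzero

theorem norm_add_smul_div_sub_sq_le {y z d : H} {A L : ℝ} (hinner : 2 * ⟪d, y - z⟫ + A ≤ 0)
    (hdA : ‖d‖ ^ 2 ≤ A) (hd : d ≠ 0) (hL0 : 0 ≤ L) (hL1 : L ≤ 1) :
    ‖y + (L * (A / ‖d‖ ^ 2)) • d - z‖ ^ 2 ≤ ‖y - z‖ ^ 2 - L * (1 - L) * ‖d‖ ^ 2 := by
  set D := ‖d‖ ^ 2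
  set s := A / D
  have hD : 0 < D := by positivity
  have hsD : s * D = A := div_mul_cancel₀ A hD.ne'
  have hs : 1 ≤ s := (one_le_div hD).2 hdA
  have hexpand : ‖y + (L * s) • d - z‖ ^ 2
      = ‖y - z‖ ^ 2 + L * s * (2 * ⟪d, y - z⟫) + L ^ 2 * s ^ 2 * D := by
    rw [add_sub_right_comm, norm_add_sq_real, real_inner_smul_right, norm_smul, mul_pow,
      Real.norm_eq_abs, sq_abs, real_inner_comm]
    ring
  have hcross : L * s * (2 * ⟪d, y - z⟫) ≤ L * s * -(s * D) :=
    mul_le_mul_of_nonneg_left (by linarith) (by positivity)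
  have hgain : L * (1 - L) * D ≤ L * (1 - L) * D * s ^ 2 := by
    have : 0 ≤ L * (1 - L) * D := by have := sub_nonneg.2 hL1; positivity
    exact le_mul_of_one_le_right this (one_le_pow₀ hs)
  rw [hexpand]
  linarith

end

theorem algorithm_step_inequality_general
    {H : Type*} [NormedAddCommGroup H] [InnerProductSpace ℝ H]
    {E : ℕ} (U : Fin E → H → H) (ω : Fin E → ℝ)
    (hω : ∀ t, 0 < ω t) (hωsum : ∑ t, ω t = 1)
    (hC : ∃ z, ∀ t, U t z = z)
    (hsqne : ∀ t x, U t x ≠ x → ∀ z, U t z = z → ‖U t x - z‖ < ‖x - z‖)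
    (T : H → H) (hT : ∀ x, T x = ∑ t, ω t • U t x)
    (σ : H → ℝ)
    (hσ1 : ∀ x, T x ≠ x → σ x = (∑ t, ω t * ‖U t x - x‖^2) / ‖T x - x‖^2)
    (ε : ℝ) (hε : ε ∈ Set.Ioo (0:ℝ) (1/2))
    (lam : ℕ → ℝ) (hlam : ∀ k, lam k ∈ Set.Icc ε (1 - ε))
    (x : ℕ → H)
    (hx : ∀ k, x (k+1) = x k + (lam k * σ (x k)) • (T (x k) - x k)) :
    ∀ z, T z = z → ∀ k, T (x k) ≠ x k →
      ‖x (k+1) - z‖^2 ≤ ‖x k - z‖^2 - lam k * (1 - lam k) * ‖T (x k) - x k‖^2 := by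
  intro z hz k hk
  have hqne : ∀ t y w, U t w = w → ‖U t y - w‖ ≤ ‖y - w‖ := fun t y w hw ↦ by
    by_cases hy : U t y = y
    · rw [hy]
    · exact (hsqne t y hy w hw).le
  obtain ⟨w, hw⟩ := hC
  have hUz : ∀ t, U t z = z :=
    eq_of_sum_smul_eq hω hωsum (fun t ↦ hqne t z w (hw t)) ((hT z).symm.trans hz)
  obtain ⟨hL0, hL1⟩ := hlam k
  rw [hx k, hσ1 _ hk]
  refine norm_add_smul_div_sub_sq_le ?_ ?_ (sub_ne_zero.2 hk) (by linarith [hε.1])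
    (by linarith [hε.1])
  · rw [hT]
    exact two_mul_inner_sum_smul_sub_add_le (fun t ↦ (hω t).le) hωsum
      fun t ↦ hqne t _ z (hUz t)
  · rw [hT]
    exact norm_sum_smul_sub_sq_le (fun t ↦ (hω t).le) hωsum _ _

theorem algorithm_step_inequality
    {H : Type*} [NormedAddCommGroup H] [InnerProductSpace ℝ H] [CompleteSpace H]
    {E : ℕ} (U : Fin E → H → H) (ω : Fin E → ℝ)
    (hω : ∀ t, 0 < ω t) (hωsum : ∑ t, ω t = 1)
    (hC : ∃ z, ∀ t, U t z = z)
    (hsqne : ∀ t x, U t x ≠ x → ∀ z, U t z = z → ‖U t x - z‖ < ‖x - z‖)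
    (T : H → H) (hT : ∀ x, T x = ∑ t, ω t • U t x)
    (σ : H → ℝ)
    (hσ1 : ∀ x, T x ≠ x → σ x = (∑ t, ω t * ‖U t x - x‖^2) / ‖T x - x‖^2)
    (hσ2 : ∀ x, T x = x → σ x = 1)
    (ε : ℝ) (hε : ε ∈ Set.Ioo (0:ℝ) (1/2))
    (lam : ℕ → ℝ) (hlam : ∀ k, lam k ∈ Set.Icc ε (1 - ε))
    (x : ℕ → H)
    (hx : ∀ k, x (k+1) = x k + (lam k * σ (x k)) • (T (x k) - x k)) :
    ∀ z, T z = z → ∀ k, T (x k) ≠ x k →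
      ‖x (k+1) - z‖^2 ≤ ‖x k - z‖^2 - lam k * (1 - lam k) * ‖T (x k) - x k‖^2 :=
  algorithm_step_inequality_general U ω hω hωsum hC hsqne T hT σ hσ1 ε hε lam hlam x hx
end

section
/- Let H be a real Hilbert space, U₁, …, U_E strictly quasi-nonexpansive with C = ⋂_t Fix U_t ≠ ∅, T = Σ ω_t U_t, and suppose each U_t − Id is demi-closed at 0. If λ_k ∈ [ε, 1−ε], then the sequence x^{k+1} = x^k + λ_k σ_max(x^k)(T x^k − x^k) converges weakly to a point of Fix T = C. -/
/-!
Fix a common fixed point `z` and put `D x = ∑ ω t * ‖U t x - x‖²`. Quasi-nonexpansiveness gives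
`⟪x - z, T x - x⟫ ≤ -D x / 2` and Jensen gives `‖T x - x‖² ≤ D x` (so `σ ≥ 1`); expanding the
square then yields `‖x (k+1) - z‖² + λ (1 - λ) D (x k) ≤ ‖x k - z‖²`. Hence the iterates are
Fejér monotone with respect to the common fixed points and `∑ D (x k) < ∞`, so
`U t (x k) - x k → 0` and demiclosedness puts every weak sequential cluster point in `C`.
Opial's lemma concludes; bounded sequences have weakly convergent subsequences by the sequential
Banach–Alaoglu theorem applied in the (separable) closed span of the sequence. Strictness of the
`U t` is what makes `Fix T = C`.
-/

open Filter Topology InnerProductSpace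

section WeakConvergence

variable {H : Type*} [NormedAddCommGroup H] [InnerProductSpace ℝ H]

def WeakTendsto (x : ℕ → H) (p : H) : Prop :=
  ∀ f : H →L[ℝ] ℝ, Tendsto (fun k => f (x k)) atTop (𝓝 (f p))

theorem WeakTendsto.tendsto_inner {x : ℕ → H} {p : H} (hx : WeakTendsto x p) (v : H) :
    Tendsto (fun k => inner ℝ v (x k)) atTop (𝓝 (inner ℝ v p)) :=
  hx (innerSL ℝ v)

theorem exists_weakTendsto_subseq_of_separableSpace [CompleteSpace H]
    [TopologicalSpace.SeparableSpace H] {y : ℕ → H} {M : ℝ} (hM : ∀ k, ‖y k‖ ≤ M) :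
    ∃ φ : ℕ → ℕ, StrictMono φ ∧ ∃ p, WeakTendsto (y ∘ φ) p := by
  let g : ℕ → WeakDual ℝ H := fun k => StrongDual.toWeakDual (toDual ℝ H (y k))
  have hg : ∀ k, g k ∈ WeakDual.toStrongDual ⁻¹' Metric.closedBall 0 M := by
    simpa [g] using hM
  obtain ⟨g', -, φ, hφ, hlim⟩ := WeakDual.isSeqCompact_closedBall ℝ H 0 M hg
  refine ⟨φ, hφ, (toDual ℝ H).symm (WeakDual.toStrongDual g'), fun f => ?_⟩
  set a := (toDual ℝ H).symm f
  have hf : ∀ w, f w = inner ℝ w a := fun w => by rw [real_inner_comm, toDual_symm_apply]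
  simp only [Function.comp_apply, hf, toDual_symm_apply]
  exact ((WeakDual.eval_continuous a).tendsto g').comp hlim

theorem exists_weakTendsto_subseq [CompleteSpace H] {y : ℕ → H} {M : ℝ}
    (hM : ∀ k, ‖y k‖ ≤ M) : ∃ φ : ℕ → ℕ, StrictMono φ ∧ ∃ p, WeakTendsto (y ∘ φ) p := by
  let K := (Submodule.span ℝ (Set.range y)).topologicalClosure
  have : TopologicalSpace.SeparableSpace K :=
    (Set.countable_range y).isSeparable.span.closure.separableSpace
  let yK : ℕ → K := fun k =>
    ⟨y k, Submodule.le_topologicalClosure _ (Submodule.subset_span ⟨k, rfl⟩)⟩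
  obtain ⟨φ, hφ, p, hp⟩ := exists_weakTendsto_subseq_of_separableSpace (y := yK) (M := M) hM
  exact ⟨φ, hφ, p, fun f => hp (f.comp K.subtypeL)⟩

end WeakConvergence

section Fejer

variable {H : Type*} [NormedAddCommGroup H]

def FejerMonotone (C : Set H) (x : ℕ → H) : Prop :=
  ∀ z ∈ C, ∀ k, ‖x (k + 1) - z‖ ≤ ‖x k - z‖

variable {C : Set H} {x : ℕ → H}

theorem FejerMonotone.antitone_norm_sub (hx : FejerMonotone C x) {z : H} (hz : z ∈ C) :
    Antitone fun k => ‖x k - z‖ :=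
  antitone_nat_of_succ_le (hx z hz)

theorem FejerMonotone.tendsto_norm_sub (hx : FejerMonotone C x) {z : H} (hz : z ∈ C) :
    ∃ L, Tendsto (fun k => ‖x k - z‖) atTop (𝓝 L) :=
  ⟨_, tendsto_atTop_ciInf (hx.antitone_norm_sub hz) ⟨0, by grind [mem_lowerBounds, norm_nonneg]⟩⟩

theorem FejerMonotone.norm_le (hx : FejerMonotone C x) {z : H} (hz : z ∈ C) (k : ℕ) :
    ‖x k‖ ≤ ‖x 0 - z‖ + ‖z‖ :=
  calc ‖x k‖ ≤ ‖x k - z‖ + ‖z‖ := norm_le_norm_sub_add _ _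
    _ ≤ ‖x 0 - z‖ + ‖z‖ := by gcongr; exact hx.antitone_norm_sub hz (Nat.zero_le k)

variable [InnerProductSpace ℝ H]

theorem FejerMonotone.tendsto_inner_sub (hx : FejerMonotone C x) {p q : H} (hp : p ∈ C)
    (hq : q ∈ C) : ∃ c, Tendsto (fun k => inner ℝ (p - q) (x k)) atTop (𝓝 c) := by
  obtain ⟨Lp, hLp⟩ := hx.tendsto_norm_sub hp
  obtain ⟨Lq, hLq⟩ := hx.tendsto_norm_sub hq
  refine ⟨(Lq ^ 2 - Lp ^ 2 + ‖p‖ ^ 2 - ‖q‖ ^ 2) / 2, ?_⟩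
  have hpol : ∀ k, inner ℝ (p - q) (x k) =
      (‖x k - q‖ ^ 2 - ‖x k - p‖ ^ 2 + ‖p‖ ^ 2 - ‖q‖ ^ 2) / 2 := fun k => by
    rw [norm_sub_sq_real, norm_sub_sq_real, inner_sub_left, real_inner_comm p, real_inner_comm q]
    ring
  simp only [hpol]
  exact ((((hLq.pow 2).sub (hLp.pow 2)).add_const _).sub_const _).div_const 2

theorem FejerMonotone.eq_of_weakTendsto (hx : FejerMonotone C x) {p q : H} (hp : p ∈ C)
    (hq : q ∈ C) {φ ψ : ℕ → ℕ} (hφ : Tendsto φ atTop atTop) (hψ : Tendsto ψ atTop atTop)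
    (hxp : WeakTendsto (x ∘ φ) p) (hxq : WeakTendsto (x ∘ ψ) q) : p = q := by
  obtain ⟨c, hc⟩ := hx.tendsto_inner_sub hp hq
  have hcp := tendsto_nhds_unique (hc.comp hφ) (hxp.tendsto_inner (p - q))
  have hcq := tendsto_nhds_unique (hc.comp hψ) (hxq.tendsto_inner (p - q))
  have : inner ℝ (p - q) (p - q) = 0 := by rw [inner_sub_right, ← hcp, ← hcq, sub_self]
  exact sub_eq_zero.mp (inner_self_eq_zero.mp this)

/-- Opial's lemma. -/
theorem FejerMonotone.exists_weakTendsto [CompleteSpace H] (hx : FejerMonotone C x)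
    (hC : C.Nonempty)
    (hcluster : ∀ φ p, Tendsto φ atTop atTop → WeakTendsto (x ∘ φ) p → p ∈ C) :
    ∃ p ∈ C, WeakTendsto x p := by
  obtain ⟨z, hz⟩ := hC
  obtain ⟨φ, hφ, p, hxp⟩ := exists_weakTendsto_subseq (hx.norm_le hz)
  have hpC := hcluster φ p hφ.tendsto_atTop hxp
  refine ⟨p, hpC, fun f => tendsto_of_subseq_tendsto fun ns hns => ?_⟩
  obtain ⟨ms, hms, q, hxq⟩ := exists_weakTendsto_subseq fun k => hx.norm_le hz (ns k)
  have hnms : Tendsto (ns ∘ ms) atTop atTop := hns.comp hms.tendsto_atTop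
  have hqC := hcluster _ q hnms hxq
  rw [hx.eq_of_weakTendsto hpC hqC hφ.tendsto_atTop hnms hxp hxq]
  exact ⟨ms, hxq f⟩

end Fejer

theorem tendsto_zero_of_add_mul_le {a b : ℕ → ℝ} {c : ℝ} (hc : 0 < c) (ha : ∀ k, 0 ≤ a k)
    (hb : ∀ k, 0 ≤ b k) (hab : ∀ k, a (k + 1) + c * b k ≤ a k) : Tendsto b atTop (𝓝 0) := by
  have hpartial : ∀ n, c * ∑ k ∈ Finset.range n, b k + a n ≤ a 0 := by
    intro n
    induction n with
    | zero => simp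
    | succ n ih => rw [Finset.sum_range_succ, mul_add]; linarith [hab n]
  refine (summable_of_sum_range_le (c := a 0 / c) hb fun n => ?_).tendsto_atTop_zero
  rw [le_div_iff₀' hc]
  linarith [hpartial n, ha n]

section WeightedSums

variable {ι : Type*} [Fintype ι] {ω : ι → ℝ}

theorem tendsto_zero_of_sum_mul_norm_sq {E : Type*} [SeminormedAddCommGroup E]
    (hω : ∀ t, 0 < ω t) {v : ι → ℕ → E}
    (hv : Tendsto (fun k => ∑ t, ω t * ‖v t k‖ ^ 2) atTop (𝓝 0)) (t : ι) :
    Tendsto (v t) atTop (𝓝 0) := by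
  have hle : ∀ k, ‖v t k‖ ^ 2 ≤ (ω t)⁻¹ * ∑ s, ω s * ‖v s k‖ ^ 2 := fun k => by
    rw [le_inv_mul_iff₀ (hω t)]
    exact Finset.single_le_sum (f := fun s => ω s * ‖v s k‖ ^ 2)
      (fun s _ => by have := hω s; positivity) (Finset.mem_univ t)
  have hsq : Tendsto (fun k => ‖v t k‖ ^ 2) atTop (𝓝 0) :=
    squeeze_zero (fun _ => by positivity) hle (by simpa using hv.const_mul (ω t)⁻¹)
  rw [tendsto_zero_iff_norm_tendsto_zero]
  simpa using hsq.sqrt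

theorem sum_smul_sub_eq {M : Type*} [AddCommGroup M] [Module ℝ M] (hω : ∑ t, ω t = 1)
    (v : ι → M) (x : M) : ∑ t, ω t • v t - x = ∑ t, ω t • (v t - x) := by
  simp [smul_sub, Finset.sum_sub_distrib, ← Finset.sum_smul, hω]

theorem norm_sum_smul_sq_le {E : Type*} [SeminormedAddCommGroup E] [NormedSpace ℝ E]
    (hω₀ : ∀ t, 0 ≤ ω t) (hω : ∑ t, ω t = 1) (v : ι → E) :
    ‖∑ t, ω t • v t‖ ^ 2 ≤ ∑ t, ω t * ‖v t‖ ^ 2 :=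
  (convexOn_univ_norm.pow (fun _ _ => norm_nonneg _) 2).map_sum_le (fun t _ => hω₀ t) hω
    (fun _ _ => Set.mem_univ _)

end WeightedSums

section Relaxation

variable {H : Type*} [NormedAddCommGroup H]

def StrictlyQuasiNonexpansive (U : H → H) : Prop :=
  ∀ x, U x ≠ x → ∀ z, U z = z → ‖U x - z‖ < ‖x - z‖

theorem StrictlyQuasiNonexpansive.norm_sub_le {U : H → H} (hU : StrictlyQuasiNonexpansive U)
    {z : H} (hz : U z = z) (x : H) : ‖U x - z‖ ≤ ‖x - z‖ := by
  by_cases hx : U x = x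
  · rw [hx]
  · exact (hU x hx z hz).le

variable [InnerProductSpace ℝ H]

theorem inner_sub_sub_le_of_norm_sub_le {x y z : H} (h : ‖y - z‖ ≤ ‖x - z‖) :
    inner ℝ (x - z) (y - x) ≤ -(‖y - x‖ ^ 2 / 2) := by
  have h2 := pow_le_pow_left₀ (norm_nonneg _) h 2
  rw [show y - z = (x - z) + (y - x) by abel, norm_add_sq_real] at h2
  linarith

theorem norm_add_smul_sub_sq_le {x z d : H} {S l : ℝ} (hl₀ : 0 ≤ l) (hl₁ : l ≤ 1) (hd : d ≠ 0)
    (hdS : ‖d‖ ^ 2 ≤ S) (hinner : inner ℝ (x - z) d ≤ -(S / 2)) :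
    ‖x + (l * (S / ‖d‖ ^ 2)) • d - z‖ ^ 2 + l * (1 - l) * S ≤ ‖x - z‖ ^ 2 := by
  have hN : 0 < ‖d‖ ^ 2 := by positivity
  set r := S / ‖d‖ ^ 2 with hr
  have hS : S = r * ‖d‖ ^ 2 := by rw [hr, div_mul_cancel₀ _ hN.ne']
  have hr1 : 1 ≤ r := by rwa [hr, one_le_div hN]
  rw [show x + (l * r) • d - z = (x - z) + (l * r) • d by abel, norm_add_sq_real,
    real_inner_smul_right, norm_smul, mul_pow, Real.norm_eq_abs, sq_abs]
  rw [hS] at hinner ⊢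
  have hlr : 0 ≤ l * r := mul_nonneg hl₀ (by linarith)
  have := mul_le_mul_of_nonneg_left hinner hlr
  have : 0 ≤ l * (1 - l) * r * ‖d‖ ^ 2 * (r - 1) := by
    have := sub_nonneg.2 hl₁; have := sub_nonneg.2 hr1; positivity
  -- the increment of the squared distance is at most `-l (1 - l) r ‖d‖² (r - 1)`
  nlinarith

variable {ι : Type*} [Fintype ι] {U : ι → H → H} {ω : ι → ℝ} {x z : H}

theorem apply_eq_self_of_sum_smul_eq_self (hω : ∀ t, 0 < ω t) (hωsum : ∑ t, ω t = 1)
    (hU : ∀ t, StrictlyQuasiNonexpansive (U t)) (hz : ∀ t, U t z = z)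
    (hx : ∑ t, ω t • U t x = x) (t : ι) : U t x = x := by
  by_contra hne
  have hlt : ∑ s, ω s * ‖U s x - z‖ < ∑ s, ω s * ‖x - z‖ :=
    Finset.sum_lt_sum (fun s _ => by gcongr; exacts [(hω s).le, (hU s).norm_sub_le (hz s) x])
      ⟨t, Finset.mem_univ t, by gcongr; exacts [hω t, hU t x hne z (hz t)]⟩
  have hle : ‖x - z‖ ≤ ∑ s, ω s * ‖U s x - z‖ :=
    calc ‖x - z‖ = ‖∑ s, ω s • (U s x - z)‖ := by rw [← sum_smul_sub_eq hωsum, hx]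
      _ ≤ ∑ s, ‖ω s • (U s x - z)‖ := norm_sum_le _ _
      _ = ∑ s, ω s * ‖U s x - z‖ := by simp [norm_smul, abs_of_pos (hω _)]
  rw [← Finset.sum_mul, hωsum, one_mul] at hlt
  linarith

theorem inner_sub_sum_smul_sub_le (hω : ∀ t, 0 ≤ ω t) (hωsum : ∑ t, ω t = 1)
    (hU : ∀ t, ‖U t x - z‖ ≤ ‖x - z‖) :
    inner ℝ (x - z) (∑ t, ω t • U t x - x) ≤ -((∑ t, ω t * ‖U t x - x‖ ^ 2) / 2) :=
  calc inner ℝ (x - z) (∑ t, ω t • U t x - x)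
      = ∑ t, ω t * inner ℝ (x - z) (U t x - x) := by
        simp [sum_smul_sub_eq hωsum, inner_sum, real_inner_smul_right]
    _ ≤ ∑ t, ω t * -(‖U t x - x‖ ^ 2 / 2) := by
        gcongr with t
        exacts [hω t, inner_sub_sub_le_of_norm_sub_le (hU t)]
    _ = -((∑ t, ω t * ‖U t x - x‖ ^ 2) / 2) := by
        simp [Finset.sum_div, mul_div_assoc]

theorem norm_relaxation_step_sub_sq_le (hω : ∀ t, 0 < ω t) (hωsum : ∑ t, ω t = 1)
    (hU : ∀ t, StrictlyQuasiNonexpansive (U t)) (hz : ∀ t, U t z = z)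
    {T : H → H} (hT : ∀ x, T x = ∑ t, ω t • U t x) {σ : H → ℝ}
    (hσ : ∀ x, T x ≠ x → σ x = (∑ t, ω t * ‖U t x - x‖ ^ 2) / ‖T x - x‖ ^ 2)
    {l : ℝ} (hl₀ : 0 ≤ l) (hl₁ : l ≤ 1) (x : H) :
    ‖x + (l * σ x) • (T x - x) - z‖ ^ 2 + l * (1 - l) * ∑ t, ω t * ‖U t x - x‖ ^ 2
      ≤ ‖x - z‖ ^ 2 := by
  by_cases hTx : T x = x
  · have hfix := apply_eq_self_of_sum_smul_eq_self hω hωsum hU hz ((hT x).symm.trans hTx)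
    simp [hTx, hfix]
  rw [hσ x hTx]
  refine norm_add_smul_sub_sq_le hl₀ hl₁ (sub_ne_zero.2 hTx) ?_ ?_ <;> rw [hT]
  · rw [sum_smul_sub_eq hωsum]
    exact norm_sum_smul_sq_le (fun t => (hω t).le) hωsum _
  · exact inner_sub_sum_smul_sub_le (fun t => (hω t).le) hωsum fun t => (hU t).norm_sub_le (hz t) x

end Relaxation

theorem algorithm_weak_convergence_general
    {H : Type*} [NormedAddCommGroup H] [InnerProductSpace ℝ H] [CompleteSpace H]
    {E : ℕ} (U : Fin E → H → H) (ω : Fin E → ℝ)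
    (hω : ∀ t, 0 < ω t) (hωsum : ∑ t, ω t = 1)
    (hC : ∃ z, ∀ t, U t z = z)
    (hsqne : ∀ t x, U t x ≠ x → ∀ z, U t z = z → ‖U t x - z‖ < ‖x - z‖)
    (T : H → H) (hT : ∀ x, T x = ∑ t, ω t • U t x)
    (σ : H → ℝ)
    (hσ1 : ∀ x, T x ≠ x → σ x = (∑ t, ω t * ‖U t x - x‖^2) / ‖T x - x‖^2)
    (ε : ℝ) (hε : ε ∈ Set.Ioo (0:ℝ) (1/2))
    (lam : ℕ → ℝ) (hlam : ∀ k, lam k ∈ Set.Icc ε (1 - ε))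
    (x : ℕ → H)
    (hx : ∀ k, x (k+1) = x k + (lam k * σ (x k)) • (T (x k) - x k))
    (hdemi : ∀ t, ∀ (y : ℕ → H) (p : H),
      (∀ f : H →L[ℝ] ℝ, Filter.Tendsto (fun k => f (y k)) Filter.atTop (nhds (f p))) →
      Filter.Tendsto (fun k => U t (y k) - y k) Filter.atTop (nhds 0) →
      U t p = p) :
    ∃ p, (∀ t, U t p = p) ∧ T p = p ∧
      (∀ f : H →L[ℝ] ℝ, Filter.Tendsto (fun k => f (x k)) Filter.atTop (nhds (f p))) := by
  set C := {z | ∀ t, U t z = z}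
  set D := fun k => ∑ t, ω t * ‖U t (x k) - x k‖ ^ 2
  have hD₀ : ∀ k, 0 ≤ D k := fun k =>
    Finset.sum_nonneg fun t _ => mul_nonneg (hω t).le (sq_nonneg _)
  have hstep : ∀ z ∈ C, ∀ k, ‖x (k + 1) - z‖ ^ 2 + ε ^ 2 * D k ≤ ‖x k - z‖ ^ 2 := by
    intro z hz k
    obtain ⟨hl₀, hl₁⟩ := hlam k
    have hε₀ := hε.1.le
    have hεl : ε ^ 2 ≤ lam k * (1 - lam k) := by
      rw [sq]; exact mul_le_mul hl₀ (by linarith) hε₀ (by linarith)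
    rw [hx k]
    linarith [norm_relaxation_step_sub_sq_le hω hωsum hsqne hz hT hσ1 (by linarith)
      (by linarith) (x k), mul_le_mul_of_nonneg_right hεl (hD₀ k)]
  have hfejer : FejerMonotone C x := fun z hz k =>
    pow_le_pow_iff_left₀ (norm_nonneg _) (norm_nonneg _) two_ne_zero |>.mp <| by
      linarith [hstep z hz k, mul_nonneg (sq_nonneg ε) (hD₀ k)]
  obtain ⟨z, hz⟩ := hC
  have hD : Tendsto D atTop (𝓝 0) :=
    tendsto_zero_of_add_mul_le (a := fun k => ‖x k - z‖ ^ 2) (pow_pos hε.1 2)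
      (fun _ => sq_nonneg _) hD₀ (hstep z hz)
  obtain ⟨p, hpC, hxp⟩ := hfejer.exists_weakTendsto ⟨z, hz⟩ fun φ q hφ hxq t =>
    hdemi t _ q hxq
      ((tendsto_zero_of_sum_mul_norm_sq (v := fun t k => U t (x k) - x k) hω hD t).comp hφ)
  refine ⟨p, hpC, ?_, hxp⟩
  rw [hT, Finset.sum_congr rfl fun t _ => by rw [hpC t], ← Finset.sum_smul, hωsum, one_smul]

theorem algorithm_weak_convergence
    {H : Type*} [NormedAddCommGroup H] [InnerProductSpace ℝ H] [CompleteSpace H]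
    {E : ℕ} (U : Fin E → H → H) (ω : Fin E → ℝ)
    (hω : ∀ t, 0 < ω t) (hωsum : ∑ t, ω t = 1)
    (hC : ∃ z, ∀ t, U t z = z)
    (hsqne : ∀ t x, U t x ≠ x → ∀ z, U t z = z → ‖U t x - z‖ < ‖x - z‖)
    (T : H → H) (hT : ∀ x, T x = ∑ t, ω t • U t x)
    (σ : H → ℝ)
    (hσ1 : ∀ x, T x ≠ x → σ x = (∑ t, ω t * ‖U t x - x‖^2) / ‖T x - x‖^2)
    (hσ2 : ∀ x, T x = x → σ x = 1)
    (ε : ℝ) (hε : ε ∈ Set.Ioo (0:ℝ) (1/2))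
    (lam : ℕ → ℝ) (hlam : ∀ k, lam k ∈ Set.Icc ε (1 - ε))
    (x : ℕ → H)
    (hx : ∀ k, x (k+1) = x k + (lam k * σ (x k)) • (T (x k) - x k))
    (hdemi : ∀ t, ∀ (y : ℕ → H) (p : H),
      (∀ f : H →L[ℝ] ℝ, Filter.Tendsto (fun k => f (y k)) Filter.atTop (nhds (f p))) →
      Filter.Tendsto (fun k => U t (y k) - y k) Filter.atTop (nhds 0) →
      U t p = p) :
    ∃ p, (∀ t, U t p = p) ∧ T p = p ∧
      (∀ f : H →L[ℝ] ℝ, Filter.Tendsto (fun k => f (x k)) Filter.atTop (nhds (f p))) :=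
  algorithm_weak_convergence_general U ω hω hωsum hC hsqne T hT σ hσ1 ε hε lam hlam x hx hdemi
end
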